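/- Consider the zero-coupon bond description ZCB = And(Give(Scale(10, One(USD))), At(now + 1yr, Scale(11, One(USD)))) with issuer Alice and proposed owner Bob, where At(T, p) = Timebound(T − Δ, T + Δ, p) and now + 1yr − Δ is strictly greater than the current time. If Bob joins the contract for ZCB in some marketplace state (so that the join rule applies and exec succeeds), then the list of newly generated contracts produced by exec contains a contract with primitive Timebound(now + 1yr − Δ, now + 1yr + Δ, Scale(11, One(USD))), issuer Alice, owner Bob, and scale factor 1; that is, Bob can claim 11 units of USD from Alice within the specified time window. -/

import Mathlib

/-- Currencies. -/
inductive Currency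
  | USD | EUR
deriving DecidableEq, Repr

/-- Addresses of external data providers. -/
abbrev Address := ℕ

/-- Parties (participants). -/
abbrev Party := ℕ

/-- Findel primitives. -/
inductive Primitive
  | Zero : Primitive
  | One : Currency → Primitive
  | Scale : ℕ → Primitive → Primitive
  | ScaleObs : Address → Primitive → Primitive
  | Give : Primitive → Primitive
  | And : Primitive → Primitive → Primitive
  | Or : Primitive → Primitive → Primitive
  | If : Address → Primitive → Primitive → Primitive
  | Timebound : ℕ → ℕ → Primitive → Primitive
deriving DecidableEq, Repr

/-- A ledger transaction: sender, receiver, amount, currency. -/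
structure Transaction where
  sender : Party
  receiver : Party
  amount : ℕ
  currency : Currency
deriving DecidableEq, Repr

/-- Balances of the parties, per currency. -/
abbrev Balance := Party → Currency → ℤ

/-- An external gateway: a partial map from addresses to values. -/
abbrev Gateway := Address → Option ℕ

/-- A Findel contract: id, description id, primitive, issuer, owner,
proposed owner, scale factor. -/
structure FindelContract where
  id : ℕ
  dscId : ℕ
  prim : Primitive
  issuer : Party
  owner : Party
  proposedOwner : Party
  scale : ℕ
deriving DecidableEq, Repr

/-- A Findel description: id, primitive and the time window in which
joining/execution is allowed. -/
structure Description where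
  id : ℕ
  prim : Primitive
  startT : ℕ
  endT : ℕ
deriving DecidableEq, Repr

/-- Update balances: transfer `s` units of `cur` from `I` to `O`. -/
def updBal (B : Balance) (I O : Party) (s : ℕ) (cur : Currency) : Balance :=
  fun p c =>
    if c = cur then
      B p c + (if p = O then (s : ℤ) else 0) - (if p = I then (s : ℤ) else 0)
    else B p c

/-- The execution function for Findel primitives.  Arguments: the primitive,
the contract id, the description id, the scale factor, the issuer, the owner,
the current time, the gateway, the current balances, the ledger and a fresh id.
It either fails (`none`) or returns the updated balances, the list of newly
generated contracts, a new fresh id and the updated ledger. -/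
def exec : Primitive → ℕ → ℕ → ℕ → Party → Party → ℕ → Gateway → Balance →
    List Transaction → ℕ →
    Option (Balance × List FindelContract × ℕ × List Transaction)
  | .Zero, _, _, _, _, _, _, _, B, L, i => some (B, [], i, L)
  | .One cur, _, _, s, I, O, _, _, B, L, i =>
      some (updBal B I O s cur, [], i, L ++ [⟨I, O, s, cur⟩])
  | .Scale k c, cid, did, s, I, O, t, G, B, L, i =>
      exec c cid did (k * s) I O t G B L i
  | .ScaleObs a c, cid, did, s, I, O, t, G, B, L, i =>
      match G a with
      | none => none
      | some k => exec c cid did (k * s) I O t G B L i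
  | .Give c, cid, did, s, I, O, t, G, B, L, i =>
      exec c cid did s O I t G B L i
  | .And c₁ c₂, cid, did, s, I, O, t, G, B, L, i =>
      match exec c₁ cid did s I O t G B L i with
      | none => none
      | some (B', Cs₁, i', L') =>
        match exec c₂ cid did s I O t G B' L' i' with
        | none => none
        | some (B'', Cs₂, i'', L'') => some (B'', Cs₁ ++ Cs₂, i'', L'')
  | .Or c₁ c₂, _, did, s, I, O, _, _, B, L, i =>
      some (B, [⟨i, did, .Or c₁ c₂, I, O, O, s⟩], i + 1, L)
  | .If a c₁ c₂, cid, did, s, I, O, t, G, B, L, i =>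
      match G a with
      | none => none
      | some v =>
        if v ≠ 0 then exec c₁ cid did s I O t G B L i
        else exec c₂ cid did s I O t G B L i
  | .Timebound t₀ t₁ c, cid, did, s, I, O, t, G, B, L, i =>
      if t₀ ≤ t ∧ t ≤ t₁ then exec c cid did s I O t G B L i
      else if t < t₀ then
        some (B, [⟨i, did, .Timebound t₀ t₁ c, I, O, O, s⟩], i + 1, L)
      else none

/-- Events triggered during the execution. -/
inductive Event
  | IssuedFor : Party → ℕ → Event
  | Executed : ℕ → Event
  | Deleted : ℕ → Event
deriving DecidableEq, Repr

/-- The marketplace state ⟨C, D, B, t, G, i, L, E⟩. -/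
structure State where
  contracts : List FindelContract
  descriptions : List Description
  balance : Balance
  time : ℕ
  gateway : Gateway
  freshId : ℕ
  ledger : List Transaction
  events : List Event

/-- Labels for the rules of the marketplace step relation. -/
inductive Rule
  | issue | join | joinOr | fail | tick
deriving DecidableEq, Repr

/-- The marketplace step relation, labeled by the applied rule. -/
inductive Step : Rule → State → State → Prop
  | issue (S : State) (dsc : Description) (I pO : Party) (s : ℕ)
      (hdsc : dsc ∈ S.descriptions) :
      Step .issue S
        { S with
          contracts := ⟨S.freshId, dsc.id, dsc.prim, I, I, pO, s⟩ :: S.contracts,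
          freshId := S.freshId + 1,
          events := .IssuedFor pO S.freshId :: S.events }
  | join (S : State) (c : FindelContract) (dsc : Description)
      (B' : Balance) (Cs : List FindelContract) (i' : ℕ) (L' : List Transaction)
      (hc : c ∈ S.contracts)
      (hunjoined : c.owner = c.issuer)
      (hdsc : dsc ∈ S.descriptions) (hdid : dsc.id = c.dscId)
      (hnotOr : ∀ c₁ c₂, c.prim ≠ .Or c₁ c₂)
      (htime : dsc.startT ≤ S.time ∧ S.time ≤ dsc.endT)
      (hexec : exec c.prim c.id c.dscId c.scale c.issuer c.proposedOwner
        S.time S.gateway S.balance S.ledger S.freshId = some (B', Cs, i', L')) :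
      Step .join S
        { S with
          contracts := Cs ++ S.contracts.erase c,
          balance := B', freshId := i', ledger := L',
          events := .Executed c.id :: S.events }
  | joinOr (S : State) (c : FindelContract) (dsc : Description)
      (c₁ c₂ d : Primitive)
      (B' : Balance) (Cs : List FindelContract) (i' : ℕ) (L' : List Transaction)
      (hc : c ∈ S.contracts)
      (hunjoined : c.owner = c.issuer)
      (hdsc : dsc ∈ S.descriptions) (hdid : dsc.id = c.dscId)
      (hOr : c.prim = .Or c₁ c₂)
      (hchoice : d = c₁ ∨ d = c₂)
      (htime : dsc.startT ≤ S.time ∧ S.time ≤ dsc.endT)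
      (hexec : exec d c.id c.dscId c.scale c.issuer c.proposedOwner
        S.time S.gateway S.balance S.ledger S.freshId = some (B', Cs, i', L')) :
      Step .joinOr S
        { S with
          contracts := Cs ++ S.contracts.erase c,
          balance := B', freshId := i', ledger := L',
          events := .Executed c.id :: S.events }
  | fail (S : State) (c : FindelContract) (dsc : Description)
      (hc : c ∈ S.contracts)
      (hunjoined : c.owner = c.issuer)
      (hdsc : dsc ∈ S.descriptions) (hdid : dsc.id = c.dscId)
      (hnotOr : ∀ c₁ c₂, c.prim ≠ .Or c₁ c₂)
      (htime : dsc.startT ≤ S.time ∧ S.time ≤ dsc.endT)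
      (hexec : exec c.prim c.id c.dscId c.scale c.issuer c.proposedOwner
        S.time S.gateway S.balance S.ledger S.freshId = none) :
      Step .fail S
        { S with
          contracts := S.contracts.erase c,
          events := .Deleted c.id :: S.events }
  | tick (S : State) :
      Step .tick S { S with time := S.time + 1 }

/-- A marketplace state is consistent when all contract identifiers are
pairwise distinct and strictly smaller than the fresh id. -/
def consistent (S : State) : Prop :=
  S.contracts.Pairwise (fun c c' => c.id ≠ c'.id) ∧
  ∀ c ∈ S.contracts, c.id < S.freshId

/-- The derived primitive `At`: `At Δ T p = Timebound (T - Δ) (T + Δ) p`. -/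
def At (Δ T : ℕ) (p : Primitive) : Primitive := .Timebound (T - Δ) (T + Δ) p

/-- The zero-coupon-bond description. -/
def ZCB (Δ now yr : ℕ) : Primitive :=
  .And (.Give (.Scale 10 (.One .USD))) (At Δ (now + yr) (.Scale 11 (.One .USD)))

section ExecLemmas

variable {p q : Primitive} {cid did s : ℕ} {I O : Party} {t : ℕ} {G : Gateway} {B : Balance}
  {L : List Transaction} {i : ℕ}

theorem exec_timebound_of_lt {t₀ t₁ : ℕ} (h : t < t₀) :
    exec (.Timebound t₀ t₁ p) cid did s I O t G B L i =
      some (B, [⟨i, did, .Timebound t₀ t₁ p, I, O, O, s⟩], i + 1, L) := by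
  simp [exec, h, Nat.not_le_of_lt h]

theorem exec_and_eq_some_iff {B'' : Balance} {Cs : List FindelContract} {i'' : ℕ}
    {L'' : List Transaction} :
    exec (.And p q) cid did s I O t G B L i = some (B'', Cs, i'', L'') ↔
      ∃ B' Cs₁ i' L' Cs₂, exec p cid did s I O t G B L i = some (B', Cs₁, i', L') ∧
        exec q cid did s I O t G B' L' i' = some (B'', Cs₂, i'', L'') ∧ Cs = Cs₁ ++ Cs₂ := by
  simp only [exec]
  rcases exec p cid did s I O t G B L i with _ | ⟨B', Cs₁, i', L'⟩
  · simp
  · rcases exec q cid did s I O t G B' L' i' with _ | ⟨B₂, Cs₂, i₂, L₂⟩ <;> aesop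

theorem exists_mem_exec_and_timebound_of_lt {t₀ t₁ : ℕ} (h : t < t₀) {B'' : Balance}
    {Cs : List FindelContract} {i'' : ℕ} {L'' : List Transaction}
    (hexec : exec (.And p (.Timebound t₀ t₁ q)) cid did s I O t G B L i =
      some (B'', Cs, i'', L'')) :
    ∃ c' ∈ Cs, c'.prim = .Timebound t₀ t₁ q ∧ c'.issuer = I ∧ c'.owner = O ∧ c'.scale = s := by
  obtain ⟨B', Cs₁, i', L', Cs₂, -, hq, rfl⟩ := exec_and_eq_some_iff.mp hexec
  rw [exec_timebound_of_lt h] at hq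
  obtain ⟨-, rfl, -, -⟩ := hq
  exact ⟨_, List.mem_append_right _ (List.mem_singleton_self _), rfl, rfl, rfl, rfl⟩

end ExecLemmas

theorem zcb_bob_can_claim_11_usd_general
    (S : State) (Alice Bob : Party) (Δ now yr : ℕ)
    (c : FindelContract)
    (hprim : c.prim = ZCB Δ now yr) (hI : c.issuer = Alice)
    (hpO : c.proposedOwner = Bob) (hs : c.scale = 1)
    (htime : S.time < now + yr - Δ)
    (B' : Balance) (Cs : List FindelContract) (i' : ℕ) (L' : List Transaction)
    (hexec : exec c.prim c.id c.dscId c.scale c.issuer c.proposedOwner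
      S.time S.gateway S.balance S.ledger S.freshId = some (B', Cs, i', L')) :
    ∃ c' ∈ Cs,
      c'.prim = .Timebound (now + yr - Δ) (now + yr + Δ) (.Scale 11 (.One .USD)) ∧
      c'.issuer = Alice ∧ c'.owner = Bob ∧ c'.scale = 1 := by
  rw [hprim, hI, hpO, hs] at hexec
  exact exists_mem_exec_and_timebound_of_lt htime hexec

/-- if Bob joins the contract for `ZCB` (issuer Alice, proposed
owner Bob, scale factor 1) in some marketplace state, where `now + yr - Δ` is
strictly greater than the current time, and `exec` succeeds, then the list of
newly generated contracts contains a contract with primitive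
`Timebound (now + yr - Δ) (now + yr + Δ) (Scale 11 (One USD))`, issuer Alice,
owner Bob and scale factor 1: Bob can claim 11 USD from Alice. -/
theorem zcb_bob_can_claim_11_usd
    (S : State) (Alice Bob : Party) (Δ now yr : ℕ)
    (c : FindelContract) (hc : c ∈ S.contracts)
    (hprim : c.prim = ZCB Δ now yr) (hI : c.issuer = Alice)
    (hpO : c.proposedOwner = Bob) (hs : c.scale = 1)
    (htime : S.time < now + yr - Δ)
    (B' : Balance) (Cs : List FindelContract) (i' : ℕ) (L' : List Transaction)
    (hexec : exec c.prim c.id c.dscId c.scale c.issuer c.proposedOwner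
      S.time S.gateway S.balance S.ledger S.freshId = some (B', Cs, i', L')) :
    ∃ c' ∈ Cs,
      c'.prim = .Timebound (now + yr - Δ) (now + yr + Δ) (.Scale 11 (.One .USD)) ∧
      c'.issuer = Alice ∧ c'.owner = Bob ∧ c'.scale = 1 :=
  zcb_bob_can_claim_11_usd_general S Alice Bob Δ now yr c hprim hI hpO hs htime B' Cs i' L' hexec
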